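/- arXiv:0905.3174 — 2 statements merged into one kernel-verified Lean document; each statement's English description precedes it below -/
import Mathlib

section
/- For any real x > 0, x + 1/x ≥ 2, with equality iff x = 1. Consequently, for p ∈ (0,1) and n ≥ 1 with p > 1/√n, the inequality √n·p/√(1-p²) + √(1-p²)/(√n·p) - 2√(1-p²) > p/√n holds. -/
/-- `x + 1/x ≥ 2` for `x > 0`, with equality iff `x = 1`; consequently, for
`p ∈ (0,1)` with `p > 1/√n`, the spectral-gap inequality
`√n·p/√(1-p²) + √(1-p²)/(√n·p) - 2√(1-p²) > p/√n` holds. -/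
theorem amgm_and_gap_inequality :
    (∀ x : ℝ, 0 < x → (2 ≤ x + 1 / x ∧ (x + 1 / x = 2 ↔ x = 1))) ∧
    ∀ (n : ℕ) (p : ℝ), 1 ≤ n → 0 < p → p < 1 → (Real.sqrt n)⁻¹ < p →
      p / Real.sqrt n <
        Real.sqrt n * p / Real.sqrt (1 - p ^ 2) +
          Real.sqrt (1 - p ^ 2) / (Real.sqrt n * p) -
            2 * Real.sqrt (1 - p ^ 2) := by
  have amgm : ∀ x : ℝ, 0 < x → (2 ≤ x + 1 / x ∧ (x + 1 / x = 2 ↔ x = 1)) := by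
    intro x hx
    have hkey : x * (x + 1 / x) = x ^ 2 + 1 := by field_simp
    constructor
    · nlinarith [sq_nonneg (x - 1)]
    · constructor
      · intro h
        have h2 : (x - 1) ^ 2 = 0 := by nlinarith
        have := pow_eq_zero_iff (n := 2) (by norm_num) |>.mp h2
        linarith [this]
      · intro h; rw [h]; norm_num
  refine ⟨amgm, ?_⟩
  intro n p hn hp hp1 hsp
  set s := Real.sqrt n with hs_def
  have hs1 : 1 ≤ s := by
    rw [hs_def]
    have : (1 : ℝ) ≤ (n : ℝ) := by exact_mod_cast hn
    simpa using Real.sqrt_le_sqrt this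
  have hs0 : 0 < s := lt_of_lt_of_le one_pos hs1
  have hp2 : 0 < 1 - p ^ 2 := by nlinarith
  set q := Real.sqrt (1 - p ^ 2) with hq_def
  have hq0 : 0 < q := Real.sqrt_pos.mpr hp2
  have hq_sq : q ^ 2 = 1 - p ^ 2 := Real.sq_sqrt hp2.le
  have hsp0 : 0 < s * p := mul_pos hs0 hp
  have hx0 : 0 < s * p / q := div_pos hsp0 hq0
  have h1 := (amgm (s * p / q) hx0).1
  have hinv : 1 / (s * p / q) = q / (s * p) := by
    rw [one_div_div]
  rw [hinv] at h1
  -- p / s < p ^ 2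
  have h2 : p / s < p ^ 2 := by
    have : s⁻¹ < p := hsp
    have := mul_lt_mul_of_pos_left this hp
    calc p / s = p * s⁻¹ := by ring
    _ < p * p := this
    _ = p ^ 2 := by ring
  -- p ^ 2 ≤ 2 - 2 * q
  have h3 : p ^ 2 ≤ 2 - 2 * q := by nlinarith [sq_nonneg (1 - q)]
  linarith
end

section
/- The mutual information I(L,p) := log₂L - H(L,p) has Taylor expansion I(L,p) = ((L-1)/2)·p²·log₂e + O(p³) as p → 0; in particular I(L,p)/p² → (L-1)/(2 ln 2) as p → 0⁺. -/
open Filter Real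

/-- The entropy `H(L,p)` of a single offset measurement, in bits. -/
noncomputable def offsetEntropy (L : ℕ) (p : ℝ) : ℝ :=
  -((L : ℝ) - 1) * ((1 - p) / L) * Real.logb 2 ((1 - p) / L)
    - (p + (1 - p) / L) * Real.logb 2 (p + (1 - p) / L)

/-- The mutual information `I(L,p) = log₂ L - H(L,p)`. -/
noncomputable def offsetInfo (L : ℕ) (p : ℝ) : ℝ :=
  Real.logb 2 L - offsetEntropy L p


open Filter Real

/-- Taylor estimate for `(1+x) log (1+x)`. -/
lemma xlogx_taylor {x : ℝ} (hx : |x| ≤ 1/2) :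
    |(1 + x) * Real.log (1 + x) - (x + x ^ 2 / 2)| ≤ 4 * |x| ^ 3 := by
  have hx1 : |(-x)| < 1 := by rw [abs_neg]; linarith
  have h := Real.abs_log_sub_add_sum_range_le hx1 2
  simp [Finset.sum_range_succ] at h
  set E : ℝ := Real.log (1 + x) - (x - x ^ 2 / 2) with hE
  have hEb : |E| ≤ 2 * |x| ^ 3 := by
    have h1 : (1:ℝ) - |x| ≥ 1/2 := by linarith
    have h2 : |x| ^ 3 / (1 - |x|) ≤ 2 * |x| ^ 3 := by
      rw [div_le_iff₀ (by linarith)]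
      nlinarith [pow_nonneg (abs_nonneg x) 3]
    have heq : -x + x ^ 2 / (1 + 1) + Real.log (1 + x) = E := by rw [hE]; ring
    rw [heq] at h
    exact h.trans h2
  have key : (1 + x) * Real.log (1 + x) - (x + x ^ 2 / 2)
      = -x ^ 3 / 2 + (1 + x) * E := by
    have : Real.log (1 + x) = x - x ^ 2 / 2 + E := by rw [hE]; ring
    rw [this]; ring
  rw [key]
  have h3 : |(1 + x) * E| ≤ (3/2) * |E| := by
    rw [abs_mul]
    have : |1 + x| ≤ 3/2 := by
      have := abs_le.mp hx
      rw [abs_le]; constructor <;> linarith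
    exact mul_le_mul_of_nonneg_right this (abs_nonneg E)
  calc |(-x ^ 3 / 2 + (1 + x) * E)| ≤ |(-x ^ 3 / 2)| + |(1 + x) * E| := abs_add_le _ _
    _ ≤ |x| ^ 3 / 2 + (3/2) * (2 * |x| ^ 3) := by
        refine add_le_add ?_ (h3.trans (by linarith))
        rw [abs_div, abs_neg, abs_pow]; simp
    _ ≤ 4 * |x| ^ 3 := by nlinarith [pow_nonneg (abs_nonneg x) 3]

lemma offsetInfo_eq (L : ℕ) (hL : 2 ≤ L) {p : ℝ} (hp : 0 < p) (hp1 : p < 1) :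
    offsetInfo L p =
      (((L : ℝ) - 1) * ((1 - p) * Real.log (1 - p))
        + (1 + ((L : ℝ) - 1) * p) * Real.log (1 + ((L : ℝ) - 1) * p))
        / ((L : ℝ) * Real.log 2) := by
  have hLpos : (0:ℝ) < L := by positivity
  have hL1 : (1:ℝ) ≤ (L:ℝ) := by exact_mod_cast Nat.one_le_of_lt hL
  have h1p : (0:ℝ) < 1 - p := by linarith
  have h2 : (0:ℝ) < 1 + ((L:ℝ) - 1) * p := by nlinarith
  have hlog2 : Real.log 2 ≠ 0 := (Real.log_pos (by norm_num)).ne'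
  have e1 : Real.log ((1 - p) / L) = Real.log (1 - p) - Real.log L :=
    Real.log_div (by linarith) (by positivity)
  have e2 : p + (1 - p) / L = (1 + ((L:ℝ) - 1) * p) / L := by
    field_simp; ring
  have e3 : Real.log ((1 + ((L:ℝ) - 1) * p) / L)
      = Real.log (1 + ((L:ℝ) - 1) * p) - Real.log L :=
    Real.log_div (by linarith) (by positivity)
  unfold offsetInfo offsetEntropy
  rw [e2]
  unfold Real.logb
  rw [e1, e3]
  field_simp
  ring

/-- Taylor expansion of the mutual information at `p = 0`:
`I(L,p) = ((L-1)/2)·p²·log₂ e + O(p³)`, and in particular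
`I(L,p)/p² → (L-1)/(2 ln 2)` as `p → 0⁺`. -/
theorem offsetInfo_taylor (L : ℕ) (hL : 2 ≤ L) :
    (fun p : ℝ => offsetInfo L p - ((L : ℝ) - 1) / 2 * p ^ 2 * Real.logb 2 (Real.exp 1))
        =O[nhdsWithin 0 (Set.Ioi 0)] (fun p : ℝ => p ^ 3) ∧
      Tendsto (fun p : ℝ => offsetInfo L p / p ^ 2) (nhdsWithin 0 (Set.Ioi 0))
        (nhds (((L : ℝ) - 1) / (2 * Real.log 2))) := by
  have hlog2 : (0:ℝ) < Real.log 2 := Real.log_pos (by norm_num)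
  have hK : (1:ℝ) ≤ (L:ℝ) - 1 := by
    have : (2:ℝ) ≤ (L:ℝ) := by exact_mod_cast hL
    linarith
  have hLpos : (0:ℝ) < (L:ℝ) := by linarith
  set K : ℝ := (L:ℝ) - 1 with hKdef
  set ε : ℝ := min (1/2) (1/(2*K)) with hεdef
  have hεpos : 0 < ε := lt_min (by norm_num) (by positivity)
  set c : ℝ := (4*K + 4*K^3) / ((L:ℝ) * Real.log 2) with hcdef
  have hcpos : 0 < c := by
    apply div_pos (by nlinarith [pow_pos (lt_of_lt_of_le one_pos hK) 3]) (by positivity)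
  have hlogbE : Real.logb 2 (Real.exp 1) = 1 / Real.log 2 := by
    rw [Real.logb, Real.log_exp]
  -- pointwise estimate
  have key : ∀ p ∈ Set.Ioo (0:ℝ) ε,
      |offsetInfo L p - K / 2 * p ^ 2 * Real.logb 2 (Real.exp 1)| ≤ c * p ^ 3 := by
    intro p hp
    obtain ⟨hp0, hpε⟩ := hp
    have hpK : K * p ≤ 1/2 := by
      have : p < 1/(2*K) := lt_of_lt_of_le hpε (min_le_right _ _)
      rw [lt_div_iff₀ (by positivity)] at this
      nlinarith
    have hphalf : p ≤ 1/2 := le_of_lt (lt_of_lt_of_le hpε (min_le_left _ _))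
    have hp1 : p < 1 := by linarith
    have e1 := xlogx_taylor (x := -p) (by rw [abs_neg, abs_of_pos hp0]; linarith)
    have e2 := xlogx_taylor (x := K * p)
      (by rw [abs_of_pos (by positivity)]; linarith)
    rw [offsetInfo_eq L hL hp0 hp1, hlogbE]
    set E1 : ℝ := (1 - p) * Real.log (1 - p) - (-p + p^2/2) with hE1
    set E2 : ℝ := (1 + K * p) * Real.log (1 + K * p) - (K*p + (K*p)^2/2) with hE2
    have hE1b : |E1| ≤ 4 * p ^ 3 := by
      have : (1 + -p) * Real.log (1 + -p) - (-p + (-p) ^ 2 / 2) = E1 := by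
        rw [hE1]; ring_nf
      rw [this] at e1
      rwa [abs_neg, abs_of_pos hp0] at e1
    have hE2b : |E2| ≤ 4 * K ^ 3 * p ^ 3 := by
      rw [abs_of_pos (mul_pos (lt_of_lt_of_le one_pos hK) hp0), mul_pow] at e2
      calc |E2| ≤ 4 * (K ^ 3 * p ^ 3) := e2
        _ = 4 * K ^ 3 * p ^ 3 := by ring
    have hid : (K * ((1 - p) * Real.log (1 - p))
          + (1 + K * p) * Real.log (1 + K * p)) / ((L : ℝ) * Real.log 2)
          - K / 2 * p ^ 2 * (1 / Real.log 2)
        = (K * E1 + E2) / ((L : ℝ) * Real.log 2) := by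
      rw [hE1, hE2]
      have hLK : (L:ℝ) = K + 1 := by rw [hKdef]; ring
      rw [hLK]
      field_simp
      ring
    rw [hid, abs_div, abs_of_pos (by positivity : (0:ℝ) < (L:ℝ) * Real.log 2),
      div_le_iff₀ (by positivity)]
    calc |K * E1 + E2| ≤ |K * E1| + |E2| := abs_add_le _ _
      _ ≤ K * (4 * p ^ 3) + 4 * K ^ 3 * p ^ 3 := by
          refine add_le_add ?_ hE2b
          rw [abs_mul, abs_of_pos (by linarith : (0:ℝ) < K)]
          exact mul_le_mul_of_nonneg_left hE1b (by linarith)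
      _ = (4*K + 4*K^3) * p ^ 3 := by ring
      _ = c * p ^ 3 * ((L:ℝ) * Real.log 2) := by
          rw [hcdef]; field_simp
  have hmem : Set.Ioo (0:ℝ) ε ∈ nhdsWithin (0:ℝ) (Set.Ioi 0) :=
    Ioo_mem_nhdsGT_of_mem ⟨le_refl 0, hεpos⟩
  constructor
  · rw [Asymptotics.isBigO_iff]
    refine ⟨c, ?_⟩
    filter_upwards [hmem] with p hp
    rw [Real.norm_eq_abs, Real.norm_eq_abs, abs_of_pos (pow_pos hp.1 3)]
    exact key p hp
  · have htend0 : Tendsto (fun p : ℝ =>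
        (offsetInfo L p - K / 2 * p ^ 2 * Real.logb 2 (Real.exp 1)) / p ^ 2)
        (nhdsWithin 0 (Set.Ioi 0)) (nhds 0) := by
      apply squeeze_zero_norm' (a := fun p => c * p)
      · filter_upwards [hmem] with p hp
        rw [Real.norm_eq_abs, abs_div, abs_of_pos (pow_pos hp.1 2),
          div_le_iff₀ (pow_pos hp.1 2)]
        calc |offsetInfo L p - K / 2 * p ^ 2 * Real.logb 2 (Real.exp 1)|
            ≤ c * p ^ 3 := key p hp
          _ = c * p * p ^ 2 := by ring
      · have : Tendsto (fun p : ℝ => c * p) (nhdsWithin 0 (Set.Ioi 0)) (nhds (c * 0)) :=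
          (tendsto_id.mono_left nhdsWithin_le_nhds).const_mul c
        simpa using this
    have heq : ∀ᶠ p in nhdsWithin (0:ℝ) (Set.Ioi 0),
        (offsetInfo L p - K / 2 * p ^ 2 * Real.logb 2 (Real.exp 1)) / p ^ 2
          + K / 2 * Real.logb 2 (Real.exp 1)
        = offsetInfo L p / p ^ 2 := by
      filter_upwards [hmem] with p hp
      have hp2 : p ^ 2 ≠ 0 := (pow_pos hp.1 2).ne'
      have hp0 : p ≠ 0 := hp.1.ne'
      field_simp
      ring
    have := htend0.add_const (K / 2 * Real.logb 2 (Real.exp 1))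
    rw [zero_add] at this
    have hconst : K / 2 * Real.logb 2 (Real.exp 1) = ((L:ℝ) - 1) / (2 * Real.log 2) := by
      rw [hlogbE, hKdef]
      field_simp
    have htend := Tendsto.congr' heq this
    rwa [hconst] at htend
end
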